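/- Let T₁, …, Tₙ with Tᵢ = [[0, Bᵢ], [Cᵢ, 0]] be off-diagonal block operators on H₁ ⊕ H₂, let 0 ≤ α ≤ 1 and p ≥ 2. Then w_p(T₁, …, Tₙ)^p ≤ max{ ‖ Σᵢ (α|Cᵢ|^p + (1−α)|Bᵢ*|^p) ‖, ‖ Σᵢ (α|Bᵢ|^p + (1−α)|Cᵢ*|^p) ‖ }, where w_p(T₁, …, Tₙ) = sup over unit vectors X of (Σᵢ |⟨TᵢX, X⟩|^p)^{1/p}. -/

import Mathlib

/-!
For a unit vector `X = (x, y)` one has `⟨TᵢX, X⟩ = ⟨Bᵢy, x⟩ + ⟨Cᵢx, y⟩`, so by Cauchy–Schwarz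
`|⟨TᵢX, X⟩|²` is at most both `⟨|Cᵢ|²x, x⟩ + ⟨|Bᵢ|²y, y⟩` and `⟨|Bᵢ*|²x, x⟩ + ⟨|Cᵢ*|²y, y⟩`.
Raising to the power `r = p/2 ≥ 1` is handled by a Hölder–McCarthy inequality for the
positive operator `A₁ ⊕ A₂`, `(⟨A₁x, x⟩ + ⟨A₂y, y⟩)^r ≤ ⟨A₁^r x, x⟩ + ⟨A₂^r y, y⟩`, which follows
from the operator Young inequality `λA ≤ λ^r A^r / r + (1 - 1/r)` at the scale
`λ = (⟨A₁^r x, x⟩ + ⟨A₂^r y, y⟩)^(-1/r)`. Taking the `α`-convex combination of the two bounds and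
summing over `i` leaves `⟨R₁x, x⟩ + ⟨R₂y, y⟩ ≤ max ‖R₁‖ ‖R₂‖` for the two operators of the
right-hand side.
-/

noncomputable section
open ContinuousLinearMap

/-- The numerical radius of a bounded operator on a complex Hilbert space. -/
def numRadius {H : Type*} [NormedAddCommGroup H] [InnerProductSpace ℂ H]
    (T : H →L[ℂ] H) : ℝ :=
  sSup {r | ∃ x : H, ‖x‖ = 1 ∧ r = ‖(inner ℂ (T x) x : ℂ)‖}

/-- The block operator `[[A, B], [C, D]]` on the Hilbert space direct sum `H₁ ⊕ H₂`. -/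
def blockOp {H₁ H₂ : Type*} [NormedAddCommGroup H₁] [InnerProductSpace ℂ H₁]
    [NormedAddCommGroup H₂] [InnerProductSpace ℂ H₂]
    (A : H₁ →L[ℂ] H₁) (B : H₂ →L[ℂ] H₁) (C : H₁ →L[ℂ] H₂) (D : H₂ →L[ℂ] H₂) :
    WithLp 2 (H₁ × H₂) →L[ℂ] WithLp 2 (H₁ × H₂) :=
  (((WithLp.prodContinuousLinearEquiv 2 ℂ H₁ H₂).symm :
      (H₁ × H₂) →L[ℂ] WithLp 2 (H₁ × H₂))).comp
    (((A.comp (fst ℂ H₁ H₂) + B.comp (snd ℂ H₁ H₂)).prod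
        (C.comp (fst ℂ H₁ H₂) + D.comp (snd ℂ H₁ H₂))).comp
      ((WithLp.prodContinuousLinearEquiv 2 ℂ H₁ H₂ :
        WithLp 2 (H₁ × H₂) →L[ℂ] (H₁ × H₂))))

/-- The absolute value `|B| = (B*B)^{1/2}` of an operator between Hilbert spaces. -/
def absOp {E F : Type*} [NormedAddCommGroup E] [InnerProductSpace ℂ E] [CompleteSpace E]
    [NormedAddCommGroup F] [InnerProductSpace ℂ F] [CompleteSpace F]
    (B : E →L[ℂ] F) : E →L[ℂ] E :=
  CFC.sqrt ((ContinuousLinearMap.adjoint B).comp B)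

/-- The functional `w_p` of a finite tuple of operators. -/
def wpRad {H : Type*} [NormedAddCommGroup H] [InnerProductSpace ℂ H] {n : ℕ}
    (T : Fin n → (H →L[ℂ] H)) (p : ℝ) : ℝ :=
  sSup {r | ∃ x : H, ‖x‖ = 1 ∧ r = (∑ i, ‖(inner ℂ (T i x) x : ℂ)‖ ^ p) ^ (1 / p)}

open RCLike

local notation "⟪" x ", " y "⟫" => @inner ℂ _ _ x y

lemma le_rpow_div_add_one_sub_one_div {s r : ℝ} (hs : 0 ≤ s) (hr : 1 ≤ r) :
    s ≤ s ^ r / r + (1 - 1 / r) := by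
  have hbern := one_add_mul_self_le_rpow_one_add (by linarith : -1 ≤ s - 1) hr
  rw [add_sub_cancel] at hbern
  have hr0 : 0 < r := by linarith
  have hr1 : (1 - 1 / r) * r = r - 1 := by field_simp
  rw [div_add' _ _ _ hr0.ne', le_div_iff₀ hr0, hr1]
  linarith

lemma rpow_le_of_forall_mul_le {u K r : ℝ} (hu : 0 ≤ u) (hK : 0 ≤ K) (hr : 1 ≤ r)
    (h : ∀ l : ℝ, 0 < l → l * u ≤ l ^ r * K / r + (1 - 1 / r)) : u ^ r ≤ K := by
  have hr0 : 0 < r := by linarith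
  rcases hK.eq_or_lt with rfl | hKpos
  · obtain rfl : u = 0 := by
      refine hu.antisymm' (not_lt.1 fun hupos => ?_)
      have := h (2 / u) (by positivity)
      rw [div_mul_cancel₀ _ hupos.ne', mul_zero, zero_div, zero_add] at this
      have : 0 < 1 / r := by positivity
      linarith
    rw [Real.zero_rpow hr0.ne']
  · set l := K ^ (-1 / r) with hl
    have hl0 : 0 < l := by positivity
    have hlK : l ^ r * K = 1 := by
      rw [hl, ← Real.rpow_mul hK, div_mul_cancel₀ _ hr0.ne', Real.rpow_neg_one,
        inv_mul_cancel₀ hKpos.ne']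
    have hlu : l * u ≤ 1 := by
      have := h l hl0
      rw [hlK] at this
      linarith
    calc u ^ r = (l * u) ^ r * K := by
          rw [Real.mul_rpow hl0.le hu, mul_comm (l ^ r), mul_assoc, hlK, mul_one]
      _ ≤ 1 ^ r * K := by gcongr
      _ = K := by rw [Real.one_rpow, one_mul]

lemma sq_add_le_of_le_mul_of_le_mul {a b s₁ s₂ t₁ t₂ : ℝ} (ha : 0 ≤ a) (hb : 0 ≤ b)
    (h₁ : a ≤ s₁ * t₁) (h₂ : b ≤ s₂ * t₂) :
    (a + b) ^ 2 ≤ (s₁ ^ 2 + s₂ ^ 2) * (t₁ ^ 2 + t₂ ^ 2) := by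
  nlinarith [sq_nonneg (s₁ * t₂ - s₂ * t₁)]

section OneSpace

variable {H : Type*} [NormedAddCommGroup H] [InnerProductSpace ℂ H]

lemma re_inner_le_re_inner_of_le {T S : H →L[ℂ] H} (h : T ≤ S) (x : H) :
    re ⟪T x, x⟫ ≤ re ⟪S x, x⟫ := by
  have := ((le_def T S).mp h).re_inner_nonneg_left x
  rwa [sub_apply, inner_sub_left, map_sub, sub_nonneg] at this

lemma re_inner_nonneg {A : H →L[ℂ] H} (hA : 0 ≤ A) (x : H) : 0 ≤ re ⟪A x, x⟫ :=
  ((nonneg_iff_isPositive A).mp hA).re_inner_nonneg_left x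

lemma re_inner_apply_le_opNorm_mul_sq (R : H →L[ℂ] H) (x : H) : re ⟪R x, x⟫ ≤ ‖R‖ * ‖x‖ ^ 2 :=
  calc re ⟪R x, x⟫ ≤ ‖R x‖ * ‖x‖ := re_inner_le_norm _ _
    _ ≤ ‖R‖ * ‖x‖ * ‖x‖ := by gcongr; exact R.le_opNorm x
    _ = ‖R‖ * ‖x‖ ^ 2 := by ring

lemma cfc_rpow_nonneg [CompleteSpace H] {A : H →L[ℂ] H} (hA : 0 ≤ A) (r : ℝ) :
    0 ≤ cfc (fun t : ℝ => t ^ r) A :=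
  cfc_nonneg fun _ ht => Real.rpow_nonneg (spectrum_nonneg_of_nonneg hA ht) r

/-- Young's inequality `l t ≤ (l t) ^ r / r + (1 - 1 / r)` lifted to the positive operator `A`. -/
lemma mul_re_inner_le_of_nonneg [CompleteSpace H] {A : H →L[ℂ] H} (hA : 0 ≤ A) {r l : ℝ}
    (hr : 1 ≤ r) (hl : 0 ≤ l) (x : H) :
    l * re ⟪A x, x⟫
      ≤ l ^ r / r * re ⟪cfc (fun t : ℝ => t ^ r) A x, x⟫ + (1 - 1 / r) * ‖x‖ ^ 2 := by
  have hcont : Continuous (fun t : ℝ => t ^ r) := Real.continuous_rpow_const (by linarith)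
  have hle : cfc (fun t : ℝ => l * t) A
      ≤ cfc (fun t : ℝ => l ^ r / r * t ^ r + (1 - 1 / r)) A := by
    refine cfc_mono fun t ht => ?_
    have ht0 : 0 ≤ t := spectrum_nonneg_of_nonneg hA ht
    have := le_rpow_div_add_one_sub_one_div (mul_nonneg hl ht0) hr
    rwa [Real.mul_rpow hl ht0, mul_div_right_comm] at this
  rw [cfc_const_mul_id l A, cfc_add_const (1 - 1 / r) _ A, cfc_const_mul _ _ A] at hle
  simpa [inner_add_left, Algebra.algebraMap_eq_smul_one, inner_smul_real_left,
    ← Complex.ofReal_pow] using re_inner_le_re_inner_of_le hle x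

end OneSpace

section TwoSpaces

variable {E F : Type*} [NormedAddCommGroup E] [InnerProductSpace ℂ E] [CompleteSpace E]
  [NormedAddCommGroup F] [InnerProductSpace ℂ F] [CompleteSpace F]

lemma adjoint_comp_self_nonneg (S : E →L[ℂ] F) : 0 ≤ (adjoint S).comp S :=
  (nonneg_iff_isPositive _).mpr (isPositive_adjoint_comp_self S)

lemma norm_apply_sq_eq_re_inner_adjoint_comp_self (S : E →L[ℂ] F) (x : E) :
    ‖S x‖ ^ 2 = re ⟪(adjoint S).comp S x, x⟫ := by
  rw [comp_apply, adjoint_inner_left, inner_self_eq_norm_sq]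

lemma absOp_eq_cfc_sqrt (S : E →L[ℂ] F) : absOp S = cfc Real.sqrt ((adjoint S).comp S) := by
  have hS := adjoint_comp_self_nonneg S
  rw [absOp, CFC.sqrt_eq_cfc, cfc_nnreal_eq_real _ _ hS]
  exact cfc_congr fun t ht => by
    rw [Real.coe_sqrt, Real.coe_toNNReal _ (spectrum_nonneg_of_nonneg hS ht)]

lemma cfc_rpow_absOp (S : E →L[ℂ] F) {r : ℝ} (hr : 0 ≤ r) :
    cfc (fun t : ℝ => t ^ r) (absOp S) = cfc (fun t : ℝ => t ^ (r / 2)) ((adjoint S).comp S) := by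
  have hS := adjoint_comp_self_nonneg S
  rw [absOp_eq_cfc_sqrt, ← cfc_comp (fun t : ℝ => t ^ r) Real.sqrt _
    (hg := (Real.continuous_rpow_const hr).continuousOn)]
  refine cfc_congr fun t ht => ?_
  rw [Function.comp_apply, Real.sqrt_eq_rpow, ← Real.rpow_mul (spectrum_nonneg_of_nonneg hS ht),
    one_div_mul_eq_div]

/-- The Hölder–McCarthy inequality for `A₁ ⊕ A₂` at the unit vector `(x₁, x₂)`. -/
lemma rpow_re_inner_add_re_inner_le {A₁ : E →L[ℂ] E} {A₂ : F →L[ℂ] F} (hA₁ : 0 ≤ A₁)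
    (hA₂ : 0 ≤ A₂) {r : ℝ} (hr : 1 ≤ r) {x₁ : E} {x₂ : F} (hx : ‖x₁‖ ^ 2 + ‖x₂‖ ^ 2 = 1) :
    (re ⟪A₁ x₁, x₁⟫ + re ⟪A₂ x₂, x₂⟫) ^ r
      ≤ re ⟪cfc (fun t : ℝ => t ^ r) A₁ x₁, x₁⟫ + re ⟪cfc (fun t : ℝ => t ^ r) A₂ x₂, x₂⟫ := by
  refine rpow_le_of_forall_mul_le (add_nonneg (re_inner_nonneg hA₁ x₁) (re_inner_nonneg hA₂ x₂))
    (add_nonneg (re_inner_nonneg (cfc_rpow_nonneg hA₁ r) x₁)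
      (re_inner_nonneg (cfc_rpow_nonneg hA₂ r) x₂)) hr fun l hl => ?_
  have h₁ := mul_re_inner_le_of_nonneg hA₁ hr hl.le x₁
  have h₂ := mul_re_inner_le_of_nonneg hA₂ hr hl.le x₂
  calc l * (re ⟪A₁ x₁, x₁⟫ + re ⟪A₂ x₂, x₂⟫)
      ≤ l ^ r / r * re ⟪cfc (fun t : ℝ => t ^ r) A₁ x₁, x₁⟫ + (1 - 1 / r) * ‖x₁‖ ^ 2
        + (l ^ r / r * re ⟪cfc (fun t : ℝ => t ^ r) A₂ x₂, x₂⟫ + (1 - 1 / r) * ‖x₂‖ ^ 2) := by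
        rw [mul_add]; exact add_le_add h₁ h₂
    _ = _ := by linear_combination (1 - 1 / r) * hx

end TwoSpaces

lemma rpow_norm_apply_sq_add_le {E₁ E₂ F₁ F₂ : Type*}
    [NormedAddCommGroup E₁] [InnerProductSpace ℂ E₁] [CompleteSpace E₁]
    [NormedAddCommGroup E₂] [InnerProductSpace ℂ E₂] [CompleteSpace E₂]
    [NormedAddCommGroup F₁] [InnerProductSpace ℂ F₁] [CompleteSpace F₁]
    [NormedAddCommGroup F₂] [InnerProductSpace ℂ F₂] [CompleteSpace F₂]
    (S₁ : E₁ →L[ℂ] F₁) (S₂ : E₂ →L[ℂ] F₂) {p : ℝ} (hp : 2 ≤ p)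
    {x₁ : E₁} {x₂ : E₂} (hx : ‖x₁‖ ^ 2 + ‖x₂‖ ^ 2 = 1) :
    (‖S₁ x₁‖ ^ 2 + ‖S₂ x₂‖ ^ 2) ^ (p / 2)
      ≤ re ⟪cfc (fun t : ℝ => t ^ p) (absOp S₁) x₁, x₁⟫
        + re ⟪cfc (fun t : ℝ => t ^ p) (absOp S₂) x₂, x₂⟫ := by
  rw [norm_apply_sq_eq_re_inner_adjoint_comp_self, norm_apply_sq_eq_re_inner_adjoint_comp_self,
    cfc_rpow_absOp S₁ (by linarith), cfc_rpow_absOp S₂ (by linarith)]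
  exact rpow_re_inner_add_re_inner_le (adjoint_comp_self_nonneg S₁) (adjoint_comp_self_nonneg S₂)
    (by linarith) hx

lemma re_inner_add_re_inner_le_max {E F : Type*} [NormedAddCommGroup E] [InnerProductSpace ℂ E]
    [NormedAddCommGroup F] [InnerProductSpace ℂ F] (R₁ : E →L[ℂ] E) (R₂ : F →L[ℂ] F)
    {x₁ : E} {x₂ : F} (hx : ‖x₁‖ ^ 2 + ‖x₂‖ ^ 2 = 1) :
    re ⟪R₁ x₁, x₁⟫ + re ⟪R₂ x₂, x₂⟫ ≤ max ‖R₁‖ ‖R₂‖ :=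
  calc re ⟪R₁ x₁, x₁⟫ + re ⟪R₂ x₂, x₂⟫
      ≤ max ‖R₁‖ ‖R₂‖ * ‖x₁‖ ^ 2 + max ‖R₁‖ ‖R₂‖ * ‖x₂‖ ^ 2 := by
        gcongr
        · exact (re_inner_apply_le_opNorm_mul_sq R₁ x₁).trans (by gcongr; exact le_max_left _ _)
        · exact (re_inner_apply_le_opNorm_mul_sq R₂ x₂).trans (by gcongr; exact le_max_right _ _)
    _ = max ‖R₁‖ ‖R₂‖ := by rw [← mul_add, hx, mul_one]

lemma wpRad_rpow_le {H : Type*} [NormedAddCommGroup H] [InnerProductSpace ℂ H] {n : ℕ}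
    (T : Fin n → (H →L[ℂ] H)) {p M : ℝ} (hp : 0 < p) (hM : 0 ≤ M)
    (h : ∀ x : H, ‖x‖ = 1 → ∑ i, ‖⟪T i x, x⟫‖ ^ p ≤ M) :
    wpRad T p ^ p ≤ M := by
  have hsup : wpRad T p ≤ M ^ (1 / p) :=
    Real.sSup_le (fun _ ⟨x, hx, hr⟩ => hr ▸ Real.rpow_le_rpow (by positivity) (h x hx)
      (by positivity)) (by positivity)
  have hnonneg : 0 ≤ wpRad T p :=
    Real.sSup_nonneg fun _ ⟨x, _, hr⟩ => hr ▸ by positivity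
  calc wpRad T p ^ p ≤ (M ^ (1 / p)) ^ p := Real.rpow_le_rpow hnonneg hsup hp.le
    _ = M := by rw [← Real.rpow_mul hM, one_div_mul_cancel hp.ne', Real.rpow_one]

section OffDiagonal

variable {H₁ H₂ : Type*} [NormedAddCommGroup H₁] [InnerProductSpace ℂ H₁]
  [NormedAddCommGroup H₂] [InnerProductSpace ℂ H₂]

lemma inner_blockOp_offDiag_self (B : H₂ →L[ℂ] H₁) (C : H₁ →L[ℂ] H₂) (X : WithLp 2 (H₁ × H₂)) :
    ⟪blockOp 0 B C 0 X, X⟫ = ⟪B X.snd, X.fst⟫ + ⟪C X.fst, X.snd⟫ := by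
  rw [WithLp.prod_inner_apply]
  simp [blockOp]

lemma norm_inner_blockOp_offDiag_sq_le (B : H₂ →L[ℂ] H₁) (C : H₁ →L[ℂ] H₂)
    (X : WithLp 2 (H₁ × H₂)) :
    ‖⟪blockOp 0 B C 0 X, X⟫‖ ^ 2 ≤ (‖C X.fst‖ ^ 2 + ‖B X.snd‖ ^ 2) * ‖X‖ ^ 2 := by
  rw [inner_blockOp_offDiag_self, WithLp.prod_norm_sq_eq_of_L2, add_comm (‖C X.fst‖ ^ 2)]
  exact (pow_le_pow_left₀ (norm_nonneg _) (norm_add_le _ _) 2).trans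
    (sq_add_le_of_le_mul_of_le_mul (norm_nonneg _) (norm_nonneg _) (norm_inner_le_norm _ _)
      (norm_inner_le_norm _ _))

lemma norm_inner_blockOp_offDiag_sq_le_adjoint [CompleteSpace H₁] [CompleteSpace H₂]
    (B : H₂ →L[ℂ] H₁) (C : H₁ →L[ℂ] H₂) (X : WithLp 2 (H₁ × H₂)) :
    ‖⟪blockOp 0 B C 0 X, X⟫‖ ^ 2 ≤ (‖adjoint B X.fst‖ ^ 2 + ‖adjoint C X.snd‖ ^ 2) * ‖X‖ ^ 2 := by
  rw [inner_blockOp_offDiag_self, WithLp.prod_norm_sq_eq_of_L2, ← adjoint_inner_right,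
    ← adjoint_inner_right C, add_comm (‖X.fst‖ ^ 2)]
  exact (pow_le_pow_left₀ (norm_nonneg _) (norm_add_le _ _) 2).trans
    (sq_add_le_of_le_mul_of_le_mul (norm_nonneg _) (norm_nonneg _)
      ((norm_inner_le_norm _ _).trans_eq (mul_comm _ _))
      ((norm_inner_le_norm _ _).trans_eq (mul_comm _ _)))

lemma rpow_norm_inner_blockOp_offDiag_le [CompleteSpace H₁] [CompleteSpace H₂]
    (B : H₂ →L[ℂ] H₁) (C : H₁ →L[ℂ] H₂) {α p : ℝ} (hα0 : 0 ≤ α) (hα1 : α ≤ 1) (hp : 2 ≤ p)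
    {X : WithLp 2 (H₁ × H₂)} (hX : ‖X‖ = 1) :
    ‖⟪blockOp 0 B C 0 X, X⟫‖ ^ p
      ≤ re ⟪(α • cfc (fun t : ℝ => t ^ p) (absOp C)
            + (1 - α) • cfc (fun t : ℝ => t ^ p) (absOp (adjoint B))) X.fst, X.fst⟫
        + re ⟪(α • cfc (fun t : ℝ => t ^ p) (absOp B)
            + (1 - α) • cfc (fun t : ℝ => t ^ p) (absOp (adjoint C))) X.snd, X.snd⟫ := by
  have hX2 : ‖X.fst‖ ^ 2 + ‖X.snd‖ ^ 2 = 1 := by rw [← WithLp.prod_norm_sq_eq_of_L2, hX, one_pow]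
  have hpow : ‖⟪blockOp 0 B C 0 X, X⟫‖ ^ p = (‖⟪blockOp 0 B C 0 X, X⟫‖ ^ 2) ^ (p / 2) := by
    rw [← Real.rpow_natCast, ← Real.rpow_mul (norm_nonneg _)]
    ring_nf
  have h₁ : ‖⟪blockOp 0 B C 0 X, X⟫‖ ^ p
      ≤ re ⟪cfc (fun t : ℝ => t ^ p) (absOp C) X.fst, X.fst⟫
        + re ⟪cfc (fun t : ℝ => t ^ p) (absOp B) X.snd, X.snd⟫ := by
    refine hpow.trans_le ((Real.rpow_le_rpow (by positivity) ?_ (by linarith)).trans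
      (rpow_norm_apply_sq_add_le C B hp hX2))
    simpa [hX] using norm_inner_blockOp_offDiag_sq_le B C X
  have h₂ : ‖⟪blockOp 0 B C 0 X, X⟫‖ ^ p
      ≤ re ⟪cfc (fun t : ℝ => t ^ p) (absOp (adjoint B)) X.fst, X.fst⟫
        + re ⟪cfc (fun t : ℝ => t ^ p) (absOp (adjoint C)) X.snd, X.snd⟫ := by
    refine hpow.trans_le ((Real.rpow_le_rpow (by positivity) ?_ (by linarith)).trans
      (rpow_norm_apply_sq_add_le (adjoint B) (adjoint C) hp hX2))
    simpa [hX] using norm_inner_blockOp_offDiag_sq_le_adjoint B C X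
  simp only [add_apply, smul_apply, inner_add_left, map_add, real_smul_eq_coe_smul (K := ℂ),
    inner_smul_left, conj_ofReal, re_ofReal_mul]
  nlinarith [mul_le_mul_of_nonneg_left h₁ hα0, mul_le_mul_of_nonneg_left h₂ (sub_nonneg.2 hα1)]

end OffDiagonal

variable {H₁ H₂ : Type*} [NormedAddCommGroup H₁] [InnerProductSpace ℂ H₁] [CompleteSpace H₁]
  [NormedAddCommGroup H₂] [InnerProductSpace ℂ H₂] [CompleteSpace H₂]

theorem wp_offDiag_le {n : ℕ} (B : Fin n → (H₂ →L[ℂ] H₁)) (C : Fin n → (H₁ →L[ℂ] H₂))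
    (α p : ℝ) (hα0 : 0 ≤ α) (hα1 : α ≤ 1) (hp : 2 ≤ p) :
    wpRad (fun i => blockOp 0 (B i) (C i) 0) p ^ p ≤
      max ‖∑ i, (α • cfc (fun t : ℝ => t ^ p) (absOp (C i))
            + (1 - α) • cfc (fun t : ℝ => t ^ p) (absOp (ContinuousLinearMap.adjoint (B i))))‖
          ‖∑ i, (α • cfc (fun t : ℝ => t ^ p) (absOp (B i))
            + (1 - α) • cfc (fun t : ℝ => t ^ p) (absOp (ContinuousLinearMap.adjoint (C i))))‖ := by
  refine wpRad_rpow_le _ (by linarith) (le_max_of_le_left (norm_nonneg _)) fun X hX => ?_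
  have hX2 : ‖X.fst‖ ^ 2 + ‖X.snd‖ ^ 2 = 1 := by rw [← WithLp.prod_norm_sq_eq_of_L2, hX, one_pow]
  refine le_trans ?_ (re_inner_add_re_inner_le_max _ _ hX2)
  simp only [sum_apply, sum_inner, map_sum, ← Finset.sum_add_distrib]
  exact Finset.sum_le_sum fun i _ => rpow_norm_inner_blockOp_offDiag_le (B i) (C i) hα0 hα1 hp hX
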